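/- arXiv:2206.09366 — 3 statements merged into one kernel-verified Lean document; each statement's English description precedes it below -/
import Mathlib

section
/- Let X, Y, Z be subsets of Z_p (p prime) and let 1 ≤ c₁ ≤ |X| and 1 ≤ c₂ ≤ |Y| be integers with c₁c₂ ≥ 16|X|. Suppose 8|X| ≤ |Y|, 8|Z| ≤ |Y|, and |Y| < p/2. Then there exist X' ⊆ X with |X'| = c₁ and Y' ⊆ Y with |Y'| = c₂ such that |(X' + Y') \ Z| ≥ 2|X|. -/
/-!
Greedy construction: fix any `X' ⊆ X` of size `c₁` and add elements of `Y` one at a time.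
While fewer than `2|X|` sums lie outside `Z`, the set `W = (X' + Y') ∪ Z` has at most `|Y|/2`
elements; averaging over `y ∈ Y`, some translate `X' + y` has at least `c₁/2` points outside `W`,
and adding that `y` gains them all. After `c₂` steps either `2|X|` sums have been reached or
`c₁c₂/2 ≥ 8|X|` have.
-/

open Finset Pointwise

variable {G : Type*} [Add G] [IsCancelAdd G] [DecidableEq G]

lemma sum_card_add_singleton_inter_le (A W Y : Finset G) :
    ∑ y ∈ Y, #((A + {y}) ∩ W) ≤ #A * #W := by
  let r : G → G → Prop := fun y a ↦ a + y ∈ W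
  calc ∑ y ∈ Y, #((A + {y}) ∩ W)
      ≤ ∑ y ∈ Y, #(A.bipartiteAbove r y) := by
        refine sum_le_sum fun y _ ↦ (card_le_card ?_).trans (card_image_le (f := (· + y)))
        intro z hz
        obtain ⟨⟨a, ha, _, rfl, rfl⟩, hW⟩ := by simpa [mem_add] using hz
        exact mem_image_of_mem _ (mem_filter.2 ⟨ha, hW⟩)
    _ = ∑ a ∈ A, #(Y.bipartiteBelow r a) := sum_card_bipartiteAbove_eq_sum_card_bipartiteBelow _
    _ ≤ ∑ _a ∈ A, #W := sum_le_sum fun a _ ↦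
        card_le_card_of_injOn (a + ·) (fun _ hy ↦ (mem_filter.1 hy).2)
          fun _ _ _ _ h ↦ add_left_cancel h
    _ = #A * #W := by rw [sum_const, smul_eq_mul]

lemma exists_card_le_two_mul_card_add_singleton_sdiff (A : Finset G) {W Y : Finset G}
    (hY : Y.Nonempty) (hW : 2 * #W ≤ #Y) : ∃ y ∈ Y, #A ≤ 2 * #((A + {y}) \ W) := by
  by_contra! hsmall
  have hsplit : ∑ y ∈ Y, #((A + {y}) \ W) + ∑ y ∈ Y, #((A + {y}) ∩ W) = #Y * #A := by
    simp [← sum_add_distrib, card_sdiff_add_card_inter, card_add_singleton]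
  have hlt : ∑ y ∈ Y, 2 * #((A + {y}) \ W) < ∑ _y ∈ Y, #A := sum_lt_sum_of_nonempty hY hsmall
  rw [← mul_sum, sum_const, smul_eq_mul] at hlt
  have := sum_card_add_singleton_inter_le A W Y
  nlinarith [Nat.mul_le_mul_left #A hW]

lemma exists_notMem_two_mul_card_add_sdiff_add_card_le {A Y : Finset G} (hA : A.Nonempty)
    (hY : Y.Nonempty) (Y' Z : Finset G) (hT : 2 * (#((A + Y') \ Z) + #Z) ≤ #Y) :
    ∃ y ∈ Y, y ∉ Y' ∧ 2 * #((A + Y') \ Z) + #A ≤ 2 * #((A + insert y Y') \ Z) := by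
  have hW : 2 * #(A + Y' ∪ Z) ≤ #Y := by
    rw [← sdiff_union_self_eq_union]
    exact (Nat.mul_le_mul_left 2 (card_union_le _ _)).trans hT
  obtain ⟨y, hyY, hy⟩ := exists_card_le_two_mul_card_add_singleton_sdiff A hY hW
  have hsplit : #((A + insert y Y') \ Z) = #((A + Y') \ Z) + #((A + {y}) \ (A + Y' ∪ Z)) := by
    rw [← card_union_of_disjoint (disjoint_sdiff.mono_left (sdiff_subset.trans subset_union_left))]
    congr 1
    rw [insert_eq, add_union]
    ext; simp only [mem_union, mem_sdiff]; tauto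
  have hgain : 0 < #((A + {y}) \ (A + Y' ∪ Z)) := by
    have := hA.card_pos; omega
  refine ⟨y, hyY, fun hyY' ↦ ?_, by omega⟩
  rw [insert_eq_of_mem hyY'] at hsplit
  omega

lemma exists_subset_card_eq_min_le_card_add_sdiff {A Y : Finset G} (hA : A.Nonempty)
    (Z : Finset G) (m : ℕ) (hm : 4 * m ≤ #Y) (hZ : 4 * #Z ≤ #Y) :
    ∀ k ≤ #Y, ∃ Y' ⊆ Y, #Y' = k ∧ min (#A * k) (2 * m) ≤ 2 * #((A + Y') \ Z) := by
  intro k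
  induction k with
  | zero => exact fun _ ↦ ⟨∅, empty_subset _, card_empty, by simp⟩
  | succ k ih =>
    intro hk
    obtain ⟨Y', hY'Y, hY'k, hmin⟩ := ih (by omega)
    by_cases hdone : m ≤ #((A + Y') \ Z)
    · obtain ⟨y, hyY, hyY'⟩ := exists_mem_notMem_of_card_lt_card (s := Y') (t := Y) (by omega)
      refine ⟨insert y Y', insert_subset hyY hY'Y, by rw [card_insert_of_notMem hyY', hY'k], ?_⟩
      have : #((A + Y') \ Z) ≤ #((A + insert y Y') \ Z) :=
        card_le_card (sdiff_subset_sdiff (add_subset_add_left (subset_insert _ _)) subset_rfl)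
      omega
    · obtain ⟨y, hyY, hyY', hgain⟩ := exists_notMem_two_mul_card_add_sdiff_add_card_le hA
        (Y.card_pos.1 (by omega)) Y' Z (by omega)
      refine ⟨insert y Y', insert_subset hyY hY'Y, by rw [card_insert_of_notMem hyY', hY'k], ?_⟩
      rw [mul_add_one]
      omega

theorem stmt3_general (p : ℕ) (X Y Z : Finset (ZMod p)) (c₁ c₂ : ℕ)
    (h11 : 1 ≤ c₁) (h12 : c₁ ≤ X.card) (h22 : c₂ ≤ Y.card)
    (hc : 16 * X.card ≤ c₁ * c₂)
    (hXY : 8 * X.card ≤ Y.card) (hZY : 8 * Z.card ≤ Y.card) :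
    ∃ X' ⊆ X, ∃ Y' ⊆ Y, X'.card = c₁ ∧ Y'.card = c₂ ∧
      2 * X.card ≤ ((X' + Y') \ Z).card := by
  obtain ⟨X', hX'X, hX'c₁⟩ := exists_subset_card_eq h12
  obtain ⟨Y', hY'Y, hY'c₂, hmin⟩ := exists_subset_card_eq_min_le_card_add_sdiff
    (card_pos.1 (hX'c₁ ▸ h11)) Z (2 * X.card) (by omega) (by omega) c₂ h22
  refine ⟨X', hX'X, Y', hY'Y, hX'c₁, hY'c₂, ?_⟩
  rw [hX'c₁] at hmin
  omega

theorem stmt3 (p : ℕ) (hp : p.Prime) (X Y Z : Finset (ZMod p)) (c₁ c₂ : ℕ)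
    (h11 : 1 ≤ c₁) (h12 : c₁ ≤ X.card) (h21 : 1 ≤ c₂) (h22 : c₂ ≤ Y.card)
    (hc : 16 * X.card ≤ c₁ * c₂)
    (hXY : 8 * X.card ≤ Y.card) (hZY : 8 * Z.card ≤ Y.card)
    (hY : (Y.card : ℝ) < (p : ℝ) / 2) :
    ∃ X' ⊆ X, ∃ Y' ⊆ Y, X'.card = c₁ ∧ Y'.card = c₂ ∧
      2 * X.card ≤ ((X' + Y') \ Z).card :=
  stmt3_general p X Y Z c₁ c₂ h11 h12 h22 hc hXY hZY
end

section
/- Let X₁, …, X_k, Y₁, …, Y_k, and Z be subsets of Z_p (p prime), and for each i let 1 ≤ c₁ⁱ ≤ |Xᵢ| and 1 ≤ c₂ⁱ ≤ |Yᵢ| be integers with c₁ⁱc₂ⁱ ≥ 16|Xᵢ|. Suppose that for all i we have 16|Xᵢ| ≤ |Yᵢ|, 16|Z| ≤ |Yᵢ|, and |Yᵢ| < p/2. Then there exist subsets Xᵢ' ⊆ Xᵢ with |Xᵢ'| = c₁ⁱ and Yᵢ' ⊆ Yᵢ with |Yᵢ'| = c₂ⁱ such that |(⋃ᵢ (Xᵢ'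 + Yᵢ')) \ Z| ≥ min(|Y₁|/16, …, |Y_k|/16, 2·Σᵢ|Xᵢ|). -/
/-!
Greedy construction. For a single pair `(X, Y)` fix any `X' ⊆ X` of size `c₁` and build `Y'` one
element at a time. While `(X' + Y') \ C` has fewer than `r` elements, `C ∪ (X' + Y')` is at most
half as large as the unused part of `Y`, so by double counting some unused `y` has
`x + y ∉ C ∪ (X' + Y')` for at least half of the `x ∈ X'`; adding it gains `c₁ / 2` new sums.
After `c₂` steps at least `min (c₁ c₂ / 2) r` sums lie outside `C`.

The pairs are then handled in turn with `C = Z ∪ (sumsets chosen so far)`: either `C` is still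
small compared with `Yᵢ`, and pair `i` contributes `2 |Xᵢ|` new elements, or the sumsets outside
`Z` already have `|Yᵢ| / 16` elements.
-/

open Finset Pointwise Function

variable {α : Type*} [DecidableEq α]

theorem card_union_sdiff_eq_card_sdiff_union_add_card_sdiff (P U Z : Finset α) :
    #((P ∪ U) \ Z) = #(P \ (Z ∪ U)) + #(U \ Z) := by
  rw [← card_union_of_disjoint]
  · congr 1
    ext z
    simp only [mem_sdiff, mem_union]
    tauto
  · exact disjoint_left.2 fun _ hP hU => (mem_sdiff.1 hP).2 (mem_union_right _ (mem_sdiff.1 hU).1)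

variable [Add α]

theorem biUnion_insert_update_add {ι : Type*} [DecidableEq ι] {I : Finset ι} {a : ι}
    (ha : a ∉ I) (X Y : ι → Finset α) (A B : Finset α) :
    ((insert a I).biUnion fun i => update X a A i + update Y a B i) =
      (A + B) ∪ I.biUnion fun i => X i + Y i := by
  rw [biUnion_insert, update_self, update_self]
  refine congrArg _ (biUnion_congr rfl fun i hi => ?_)
  have hia : i ≠ a := ne_of_mem_of_not_mem hi ha
  rw [update_of_ne hia, update_of_ne hia]

variable [IsCancelAdd α]

theorem exists_two_mul_card_filter_add_mem_le (X S : Finset α) {B : Finset α}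
    (hB : B.Nonempty) (hSB : 2 * #S ≤ #B) : ∃ y ∈ B, 2 * #{x ∈ X | x + y ∈ S} ≤ #X := by
  have hcount : ∑ y ∈ B, #{x ∈ X | x + y ∈ S} ≤ #X * #S :=
    calc ∑ y ∈ B, #{x ∈ X | x + y ∈ S}
        = ∑ x ∈ X, #{y ∈ B | x + y ∈ S} := by simp only [card_filter]; exact sum_comm
      _ ≤ ∑ _x ∈ X, #S := sum_le_sum fun x _ =>
          card_le_card_of_injOn (x + ·) (fun _ hy => (mem_filter.1 hy).2)
            fun _ _ _ _ h => add_left_cancel h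
      _ = #X * #S := by rw [sum_const, smul_eq_mul]
  obtain ⟨y, hy, hyavg⟩ : ∃ y ∈ B, #B * #{x ∈ X | x + y ∈ S} ≤ #X * #S := by
    refine exists_le_of_sum_le hB ?_
    rw [← mul_sum, sum_const, smul_eq_mul]
    exact Nat.mul_le_mul_left _ hcount
  refine ⟨y, hy, ?_⟩
  rcases S.eq_empty_or_nonempty with rfl | hS
  · simp
  · refine Nat.le_of_mul_le_mul_right ?_ hS.card_pos
    nlinarith

theorem card_sdiff_add_card_le_card_add_insert_sdiff (X A C : Finset α) (y : α) :
    #((X + A) \ C) + #X ≤ #((X + insert y A) \ C) + #{x ∈ X | x + y ∈ C ∪ (X + A)} := by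
  set S := C ∪ (X + A)
  set E := {x ∈ X | x + y ∉ S}.image (· + y)
  have hE : #E = #{x ∈ X | x + y ∉ S} :=
    card_image_of_injective _ fun _ _ h => add_right_cancel h
  have hdisj : Disjoint ((X + A) \ C) E := by
    rw [disjoint_right]
    intro z hz hzD
    obtain ⟨x, hx, rfl⟩ := mem_image.1 hz
    exact (mem_filter.1 hx).2 (mem_union_right _ (mem_sdiff.1 hzD).1)
  have hsub : (X + A) \ C ∪ E ⊆ (X + insert y A) \ C := by
    refine union_subset (sdiff_subset_sdiff (add_subset_add_left (subset_insert _ _)) le_rfl) ?_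
    intro z hz
    obtain ⟨x, hx, rfl⟩ := mem_image.1 hz
    obtain ⟨hxX, hxS⟩ := mem_filter.1 hx
    exact mem_sdiff.2 ⟨add_mem_add hxX (mem_insert_self _ _), fun h => hxS (mem_union_left _ h)⟩
  have := card_le_card hsub
  rw [card_union_of_disjoint hdisj, hE] at this
  have := card_filter_add_card_filter_not (s := X) (fun x => x + y ∈ S)
  omega

theorem exists_subset_card_eq_min_le_card_add_sdiff_s4 {X Y C : Finset α} {m r : ℕ}
    (hX : X.Nonempty) (hm : m ≤ #Y) (hY : 2 * #C + 4 * r ≤ #Y) :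
    ∃ A ⊆ Y, #A = m ∧ min (m * #X) (2 * r) ≤ 2 * #((X + A) \ C) := by
  induction m with
  | zero => exact ⟨∅, empty_subset _, card_empty, by simp⟩
  | succ m ih =>
    obtain ⟨A, hAY, hA, hmin⟩ := ih (by omega)
    have hcard : #(Y \ A) = #Y - m := by rw [card_sdiff_of_subset hAY, hA]
    have hne : (Y \ A).Nonempty := by rw [← card_pos]; omega
    have hgrow : ∀ y ∈ Y \ A, insert y A ⊆ Y ∧ #(insert y A) = m + 1 := fun y hy =>
      ⟨insert_subset (mem_sdiff.1 hy).1 hAY, by rw [card_insert_of_notMem (mem_sdiff.1 hy).2, hA]⟩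
    by_cases hdone : r ≤ #((X + A) \ C)
    · obtain ⟨y, hy⟩ := hne
      refine ⟨insert y A, (hgrow y hy).1, (hgrow y hy).2, ?_⟩
      have : #((X + A) \ C) ≤ #((X + insert y A) \ C) :=
        card_le_card (sdiff_subset_sdiff (add_subset_add_left (subset_insert _ _)) le_rfl)
      omega
    · have hXpos := hX.card_pos
      have hm : m * #X < 2 * r := by omega
      have hmr : m < 2 * r := lt_of_le_of_lt (Nat.le_mul_of_pos_right m hXpos) hm
      have hS : #(C ∪ (X + A)) = #C + #((X + A) \ C) := by
        rw [← union_sdiff_self_eq_union, card_union_of_disjoint disjoint_sdiff]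
      obtain ⟨y, hy, hk⟩ :=
        exists_two_mul_card_filter_add_mem_le X (C ∪ (X + A)) hne (by omega)
      refine ⟨insert y A, (hgrow y hy).1, (hgrow y hy).2, ?_⟩
      have := card_sdiff_add_card_le_card_add_insert_sdiff X A C y
      rw [add_mul, one_mul]
      omega

theorem exists_subsets_le_card_add_sdiff {X Y C : Finset α} {c₁ c₂ r : ℕ}
    (hc₁ : 0 < c₁) (hc₁X : c₁ ≤ #X) (hc₂Y : c₂ ≤ #Y) (hr : 2 * r ≤ c₁ * c₂)
    (hY : 2 * #C + 4 * r ≤ #Y) :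
    ∃ X' ⊆ X, #X' = c₁ ∧ ∃ Y' ⊆ Y, #Y' = c₂ ∧ r ≤ #((X' + Y') \ C) := by
  obtain ⟨X', hX'X, hX'⟩ := exists_subset_card_eq hc₁X
  obtain ⟨Y', hY'Y, hY', hmin⟩ := exists_subset_card_eq_min_le_card_add_sdiff_s4
    (X := X') (card_pos.1 (hX' ▸ hc₁)) hc₂Y hY
  rw [hX', mul_comm, min_eq_right hr] at hmin
  exact ⟨X', hX'X, hX', Y', hY'Y, hY', by omega⟩

theorem exists_subsets_le_card_biUnion_add_sdiff {ι : Type*} [DecidableEq ι] (I : Finset ι)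
    (X Y : ι → Finset α) (Z : Finset α) (c₁ c₂ : ι → ℕ)
    (h1 : ∀ i ∈ I, 1 ≤ c₁ i ∧ c₁ i ≤ #(X i)) (h2 : ∀ i ∈ I, c₂ i ≤ #(Y i))
    (hc : ∀ i ∈ I, 4 * #(X i) ≤ c₁ i * c₂ i) (hXY : ∀ i ∈ I, 16 * #(X i) ≤ #(Y i))
    (hZY : ∀ i ∈ I, 16 * #Z ≤ #(Y i)) :
    ∃ X' Y' : ι → Finset α,
      (∀ i ∈ I, X' i ⊆ X i ∧ #(X' i) = c₁ i ∧ Y' i ⊆ Y i ∧ #(Y' i) = c₂ i) ∧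
      (2 * ∑ i ∈ I, #(X i) ≤ #((I.biUnion fun i => X' i + Y' i) \ Z) ∨
        ∃ i ∈ I, #(Y i) ≤ 16 * #((I.biUnion fun i => X' i + Y' i) \ Z)) := by
  induction I using Finset.induction_on with
  | empty => exact ⟨fun _ => ∅, fun _ => ∅, by simp, by simp⟩
  | @insert a I ha ih =>
    have ha' := mem_insert_self a I
    obtain ⟨X', Y', hX'Y', hbound⟩ := ih (fun i hi => h1 i (mem_insert_of_mem hi))
      (fun i hi => h2 i (mem_insert_of_mem hi)) (fun i hi => hc i (mem_insert_of_mem hi))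
      (fun i hi => hXY i (mem_insert_of_mem hi)) (fun i hi => hZY i (mem_insert_of_mem hi))
    set U := I.biUnion fun i => X' i + Y' i
    have hZU : #(Z ∪ U) = #Z + #(U \ Z) := by
      rw [← union_sdiff_self_eq_union, card_union_of_disjoint disjoint_sdiff]
    obtain ⟨X₀, hX₀, hX₀c, Y₀, hY₀, hY₀c, hnew⟩ : ∃ X₀ ⊆ X a, #X₀ = c₁ a ∧ ∃ Y₀ ⊆ Y a,
        #Y₀ = c₂ a ∧ (2 * #(Z ∪ U) + 8 * #(X a) ≤ #(Y a) →
          2 * #(X a) ≤ #((X₀ + Y₀) \ (Z ∪ U))) := by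
      by_cases hsmall : 2 * #(Z ∪ U) + 8 * #(X a) ≤ #(Y a)
      · obtain ⟨X₀, hX₀, hX₀c, Y₀, hY₀, hY₀c, hgain⟩ := exists_subsets_le_card_add_sdiff
          (C := Z ∪ U) (r := 2 * #(X a)) (h1 a ha').1 (h1 a ha').2 (h2 a ha')
          (by linarith [hc a ha']) (by omega)
        exact ⟨X₀, hX₀, hX₀c, Y₀, hY₀, hY₀c, fun _ => hgain⟩
      · obtain ⟨X₀, hX₀, hX₀c⟩ := exists_subset_card_eq (h1 a ha').2
        obtain ⟨Y₀, hY₀, hY₀c⟩ := exists_subset_card_eq (h2 a ha')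
        exact ⟨X₀, hX₀, hX₀c, Y₀, hY₀, hY₀c, fun h => absurd h hsmall⟩
    refine ⟨update X' a X₀, update Y' a Y₀, fun i hi => ?_, ?_⟩
    · rcases eq_or_ne i a with rfl | hia
      · simp only [update_self]
        exact ⟨hX₀, hX₀c, hY₀, hY₀c⟩
      · rw [update_of_ne hia, update_of_ne hia]
        exact hX'Y' i ((mem_insert.1 hi).resolve_left hia)
    rw [biUnion_insert_update_add ha, sum_insert ha,
      card_union_sdiff_eq_card_sdiff_union_add_card_sdiff]
    rcases hbound with hbound | ⟨i, hi, hYi⟩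
    · by_cases hsmall : 2 * #(Z ∪ U) + 8 * #(X a) ≤ #(Y a)
      · exact Or.inl (by linarith [hnew hsmall])
      · exact Or.inr ⟨a, ha', by linarith [hXY a ha', hZY a ha']⟩
    · exact Or.inr ⟨i, mem_insert_of_mem hi, by linarith⟩

theorem stmt4_general (p k : ℕ)
    (X Y : Fin k → Finset (ZMod p)) (Z : Finset (ZMod p))
    (c₁ c₂ : Fin k → ℕ)
    (h1 : ∀ i, 1 ≤ c₁ i ∧ c₁ i ≤ (X i).card)
    (h2 : ∀ i, 1 ≤ c₂ i ∧ c₂ i ≤ (Y i).card)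
    (hc : ∀ i, 16 * (X i).card ≤ c₁ i * c₂ i)
    (hXY : ∀ i, 16 * (X i).card ≤ (Y i).card)
    (hZY : ∀ i, 16 * Z.card ≤ (Y i).card) :
    ∃ X' : Fin k → Finset (ZMod p), ∃ Y' : Fin k → Finset (ZMod p),
      (∀ i, X' i ⊆ X i ∧ (X' i).card = c₁ i ∧ Y' i ⊆ Y i ∧ (Y' i).card = c₂ i) ∧
      min (⨅ i : Fin k, ((Y i).card : ℝ) / 16) (2 * ∑ i : Fin k, ((X i).card : ℝ)) ≤
        (((Finset.univ.biUnion fun i => X' i + Y' i) \ Z).card : ℝ) := by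
  obtain ⟨X', Y', hX'Y', hbound⟩ := exists_subsets_le_card_biUnion_add_sdiff univ X Y Z c₁ c₂
    (fun i _ => h1 i) (fun i _ => (h2 i).2) (fun i _ => by linarith [hc i]) (fun i _ => hXY i)
    (fun i _ => hZY i)
  refine ⟨X', Y', fun i => hX'Y' i (mem_univ i), ?_⟩
  rcases hbound with hsum | ⟨i, -, hYi⟩
  · refine min_le_of_right_le ?_
    exact_mod_cast hsum
  · refine min_le_of_left_le ((ciInf_le (Finite.bddBelow_range _) i).trans ?_)
    rw [div_le_iff₀ (by norm_num), mul_comm]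
    exact_mod_cast hYi

theorem stmt4 (p k : ℕ) (hp : p.Prime) (hk : 0 < k)
    (X Y : Fin k → Finset (ZMod p)) (Z : Finset (ZMod p))
    (c₁ c₂ : Fin k → ℕ)
    (h1 : ∀ i, 1 ≤ c₁ i ∧ c₁ i ≤ (X i).card)
    (h2 : ∀ i, 1 ≤ c₂ i ∧ c₂ i ≤ (Y i).card)
    (hc : ∀ i, 16 * (X i).card ≤ c₁ i * c₂ i)
    (hXY : ∀ i, 16 * (X i).card ≤ (Y i).card)
    (hZY : ∀ i, 16 * Z.card ≤ (Y i).card)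
    (hY : ∀ i, ((Y i).card : ℝ) < (p : ℝ) / 2) :
    ∃ X' : Fin k → Finset (ZMod p), ∃ Y' : Fin k → Finset (ZMod p),
      (∀ i, X' i ⊆ X i ∧ (X' i).card = c₁ i ∧ Y' i ⊆ Y i ∧ (Y' i).card = c₂ i) ∧
      min (⨅ i : Fin k, ((Y i).card : ℝ) / 16) (2 * ∑ i : Fin k, ((X i).card : ℝ)) ≤
        (((Finset.univ.biUnion fun i => X' i + Y' i) \ Z).card : ℝ) :=
  stmt4_general p k X Y Z c₁ c₂ h1 h2 hc hXY hZY
end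

section
/- For all 0 < α, β < 2⁻¹⁰ the following holds for any prime p. Consider partitions Z_p = I₀ ⊔ I₁ ⊔ I₂ ⊔ I₃ = J₀ ⊔ J₁ ⊔ J₂ ⊔ J₃ into consecutive intervals such that |I₂| + |J₂| ≤ (1 − β/2)p, (α/2)|J₂| ≤ |I₂| ≤ (2/α)|J₂|, min(|I₂|, |J₂|) ≥ 24/β, and ⌊(β/8)p⌋ ≤ min(|I₁|, |I₃|, |J₁|, |J₃|) ≤ max(|I₁|, |I₃|, |J₁|, |J₃|) ≤ (β/4)p. Then there is an integer k ≤ 100/(αβ) and four families of subsets of Z_p, each of size k: {I₀¹, …, I₀ᵏ}, {I₂¹, …, I₂ᵏ}, {J₀¹, …, J₀ᵏ}, {J₂¹, …, J₂ᵏ}, such that ⋃ᵢ I₀ⁱ = I₀, ⋃ᵢ J₀ⁱ = J₀, ⋃ᵢ I₂ⁱ ⊆ I₂, ⋃ᵢ J₂ⁱ ⊆ J₂, and for every 1 ≤ i ≤ k the sets I₂ⁱ and J₂ⁱ are intervals with |I₂ⁱ| = |J₂ⁱ| = ⌊(β/24)·min(|I₂|, |J₂|)⌋ and (I₀ⁱ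 + J₂ⁱ) ∩ (I₂ + J₂) = (J₀ⁱ + I₂ⁱ) ∩ (I₂ + J₂) = ∅. -/
/-!
`I₂ + J₂` is an interval of length `|I₂| + |J₂| - 1`, so its complement has length at least
`βp/2`. Let `L = ⌊(β/24) min(|I₂|, |J₂|)⌋`, `x = a + v ∈ I₀`, and let `J'` be the subinterval of
`J₂` of length `L` at offset `u`. Going once around `ℤ/p`, `x + J'` starts
`v + |I₂| + |I₃| + u` steps after the start of `I₂ + J₂`, so it misses `I₂ + J₂` as soon as
this number lies in a certain window of `s = p + 2 - |I₂| - |J₂| - L ≥ (11/24)βp` consecutive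
values. The offsets `0, s, 2s, …` (clamped to the end of `J₂`) therefore serve every `x`, and
there are at most `|J₂|/s + 2 ≤ 100/(αβ)` of them; `I₀ⁱ` collects the `x` served by the `i`-th.
-/

open Finset Pointwise

/-- The interval `{a, a+1, ..., a+n-1}` in `ZMod p`. -/
def zmodInterval (p : ℕ) (a : ZMod p) (n : ℕ) : Finset (ZMod p) :=
  (Finset.range n).image (fun i : ℕ => a + (i : ZMod p))

theorem Nat.exists_mul_mem_Ico (A : ℕ) {s : ℕ} (hs : 0 < s) :
    ∃ i, A ≤ i * s ∧ i * s < A + s := by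
  refine ⟨(A + s - 1) / s, ?_, ?_⟩
  · have := Nat.lt_div_mul_add (a := A + s - 1) hs
    omega
  · have := Nat.div_mul_le_self (A + s - 1) s
    omega

theorem exists_clamped_grid_offset {s D k c T L p : ℕ} (hs : 0 < s) (hk : D / s + 2 ≤ k)
    (hTD : T ≤ c + D) (hcL : c + L ≤ p) (hwin : T + s + L ≤ p + 1) :
    ∃ i < k, T ≤ c + min (i * s) D ∧ c + min (i * s) D + L ≤ p := by
  rcases le_or_gt T c with hTc | hcT
  · refine ⟨0, (Nat.succ_pos _).trans_le hk, ?_, ?_⟩ <;> rw [zero_mul, Nat.zero_min] <;> omega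
  obtain ⟨i, hAi, hiA⟩ := Nat.exists_mul_mem_Ico (T - c) hs
  have hik : i < k := by
    have := Nat.lt_div_mul_add (a := D) hs
    refine lt_of_lt_of_le (Nat.lt_of_mul_lt_mul_right (a := s) ?_) hk
    rw [add_mul]
    omega
  exact ⟨i, hik, by omega, by omega⟩

theorem ZMod.natCast_inj_of_lt {p i j : ℕ} (hi : i < p) (hj : j < p)
    (h : (i : ZMod p) = j) : i = j := by
  simpa [ZMod.val_natCast_of_lt hi, ZMod.val_natCast_of_lt hj] using congrArg ZMod.val h

theorem mem_zmodInterval {p n : ℕ} {a x : ZMod p} :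
    x ∈ zmodInterval p a n ↔ ∃ i < n, a + i = x := by
  simp [zmodInterval]

theorem card_zmodInterval {p n : ℕ} (a : ZMod p) (hn : n ≤ p) :
    (zmodInterval p a n).card = n := by
  rw [zmodInterval, card_image_of_injOn, card_range]
  intro i hi j hj hij
  simp only [coe_range, Set.mem_Iio] at hi hj
  exact ZMod.natCast_inj_of_lt (by omega) (by omega) (add_left_cancel hij)

theorem add_natCast_notMem_zmodInterval {p n t : ℕ} (a : ZMod p) (hnt : n ≤ t) (htp : t < p) :
    a + t ∉ zmodInterval p a n := by
  rw [mem_zmodInterval]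
  rintro ⟨i, hi, hit⟩
  have := ZMod.natCast_inj_of_lt (by omega) htp (add_left_cancel hit)
  omega

theorem zmodInterval_add_subset {p n m : ℕ} (a b : ZMod p) :
    zmodInterval p a n + zmodInterval p b m ⊆ zmodInterval p (a + b) (n + m - 1) := by
  intro z hz
  obtain ⟨_, hx, _, hy, rfl⟩ := mem_add.1 hz
  obtain ⟨i, hi, rfl⟩ := mem_zmodInterval.1 hx
  obtain ⟨j, hj, rfl⟩ := mem_zmodInterval.1 hy
  exact mem_zmodInterval.2 ⟨i + j, by omega, by push_cast; ring⟩

theorem zmodInterval_add_natCast_subset {p u L n : ℕ} (c : ZMod p) (h : u + L ≤ n) :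
    zmodInterval p (c + u) L ⊆ zmodInterval p c n := by
  intro x hx
  obtain ⟨j, hj, rfl⟩ := mem_zmodInterval.1 hx
  exact mem_zmodInterval.2 ⟨u + j, by omega, by push_cast; ring⟩

def gridSubinterval (p : ℕ) (c : ZMod p) (n L s i : ℕ) : Finset (ZMod p) :=
  zmodInterval p (c + ((min (i * s) (n - L) : ℕ) : ZMod p)) L

theorem gridSubinterval_subset {p n L s i : ℕ} (c : ZMod p) (hL : L ≤ n) :
    gridSubinterval p c n L s i ⊆ zmodInterval p c n :=
  zmodInterval_add_natCast_subset c (by omega)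

theorem card_gridSubinterval {p n L s i : ℕ} (c : ZMod p) (hLp : L ≤ p) :
    (gridSubinterval p c n L s i).card = L :=
  card_zmodInterval _ hLp

theorem exists_gridSubinterval_add_notMem {p : ℕ} (a b : ZMod p)
    {n₀ n₁ n₂ n₃ m₀ m₁ m₂ L s k : ℕ} (hn : n₀ + n₁ + n₂ + n₃ = p)
    (hL : 0 < L) (hLn₁ : L ≤ n₁) (hLn₃ : L ≤ n₃) (hLm₂ : L ≤ m₂) (hs : 0 < s)
    (hsp : n₂ + m₂ + L + s ≤ p + 2) (hk : m₂ / s + 2 ≤ k) {x : ZMod p}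
    (hx : x ∈ zmodInterval p a n₀) :
    ∃ i : Fin k, ∀ y ∈ gridSubinterval p (b + ((m₀ + m₁ : ℕ) : ZMod p)) m₂ L s i,
      x + y ∉ zmodInterval p (a + ((n₀ + n₁ : ℕ) : ZMod p)) n₂ +
        zmodInterval p (b + ((m₀ + m₁ : ℕ) : ZMod p)) m₂ := by
  obtain ⟨v, hv, rfl⟩ := mem_zmodInterval.1 hx
  have hk' : (m₂ - L) / s + 2 ≤ k := le_trans (by gcongr; omega) hk
  obtain ⟨i, hik, hT, hp⟩ := exists_clamped_grid_offset (c := v + n₂ + n₃) (T := n₂ + m₂ - 1)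
    (D := m₂ - L) (L := L) (p := p) hs hk' (by omega) (by omega) (by omega)
  refine ⟨⟨i, hik⟩, fun y hy hxy => ?_⟩
  obtain ⟨j, hj, rfl⟩ := mem_zmodInterval.1 hy
  set u := min (i * s) (m₂ - L)
  have hxy' : a + v + (b + ((m₀ + m₁ : ℕ) : ZMod p) + u + j) =
      a + ((n₀ + n₁ : ℕ) : ZMod p) + (b + ((m₀ + m₁ : ℕ) : ZMod p)) +
        ((v + n₂ + n₃ + u + j : ℕ) : ZMod p) := by
    have hp0 : ((n₀ + n₁ + n₂ + n₃ : ℕ) : ZMod p) = 0 := by rw [hn, ZMod.natCast_self]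
    push_cast at hp0 ⊢
    linear_combination -hp0
  exact add_natCast_notMem_zmodInterval _ (by omega) (by omega)
    (zmodInterval_add_subset _ _ (hxy' ▸ hxy))

theorem exists_biUnion_eq_add_inter_eq_empty {G ι : Type*} [Add G] [DecidableEq G]
    [Fintype ι] {X C : Finset G} {Y : ι → Finset G} (h : ∀ x ∈ X, ∃ i, ∀ y ∈ Y i, x + y ∉ C) :
    ∃ f : ι → Finset G, univ.biUnion f = X ∧ ∀ i, (f i + Y i) ∩ C = ∅ := by
  classical
  refine ⟨fun i => X.filter fun x => ∀ y ∈ Y i, x + y ∉ C, ?_, fun i => ?_⟩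
  · refine (biUnion_subset.2 fun i _ => filter_subset _ _).antisymm fun x hx => ?_
    obtain ⟨i, hi⟩ := h x hx
    exact mem_biUnion.2 ⟨i, mem_univ _, mem_filter.2 ⟨hx, hi⟩⟩
  · refine eq_empty_iff_forall_notMem.2 fun z hz => ?_
    obtain ⟨hz, hxy⟩ := mem_inter.1 hz
    obtain ⟨x, hx, y, hy, rfl⟩ := mem_add.1 hz
    exact (mem_filter.1 hx).2 y hy hxy

theorem add_add_le_of_le_one_sub_mul {β : ℝ} {n m L p : ℕ}
    (hsum : (n : ℝ) + m ≤ (1 - β / 2) * p) (hL : (L : ℝ) ≤ β / 24 * p) : n + m + L ≤ p := by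
  have : (n + m + L : ℝ) ≤ p := by nlinarith [p.cast_nonneg (α := ℝ)]
  exact_mod_cast this

theorem natCast_max_div_add_two_le {α β : ℝ} (hα : 0 < α) (hα1 : α ≤ 1) (hβ : 0 < β)
    (hβ1 : β ≤ 1) {n m L p : ℕ} (hsum : (n : ℝ) + m ≤ (1 - β / 2) * p)
    (hL : (L : ℝ) ≤ β / 24 * p) :
    ((max n m / (p + 2 - (n + m + L)) + 2 : ℕ) : ℝ) ≤ 100 / (α * β) := by
  set s := p + 2 - (n + m + L)
  have hs : 11 / 24 * β * p ≤ s := by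
    have := add_add_le_of_le_one_sub_mul hsum hL
    have : (s : ℝ) + (n + m + L) = p + 2 := by
      exact_mod_cast (show s + (n + m + L) = p + 2 by omega)
    linarith
  have hNp : (max n m : ℝ) ≤ p := by
    exact_mod_cast (show max n m ≤ p by have := add_add_le_of_le_one_sub_mul hsum hL; omega)
  have hNs : ((max n m / s : ℕ) : ℝ) ≤ 24 / (11 * β) := by
    rcases Nat.eq_zero_or_pos s with hs0 | hs0
    · simp only [hs0, Nat.div_zero, CharP.cast_eq_zero]; positivity
    · calc ((max n m / s : ℕ) : ℝ) ≤ (max n m : ℕ) / s := Nat.cast_div_le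
        _ ≤ 24 / (11 * β) := by
          rw [div_le_div_iff₀ (by positivity) (by positivity)]; push_cast; nlinarith
  have h24 : 24 / (11 * β) + 2 ≤ 100 / (α * β) := by
    rw [div_add' _ _ _ (by positivity), div_le_div_iff₀ (by positivity) (by positivity)]
    nlinarith [mul_pos hα hβ, mul_pos (mul_pos hα hβ) hβ]
  push_cast
  linarith

theorem stmt5_general (α β : ℝ) (hα : 0 < α) (hβ : 0 < β)
    (hα' : α < ((2 : ℝ) ^ (10 : ℕ))⁻¹) (hβ' : β < ((2 : ℝ) ^ (10 : ℕ))⁻¹)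
    (p : ℕ)
    (a b : ZMod p) (n₀ n₁ n₂ n₃ m₀ m₁ m₂ m₃ : ℕ)
    (hn : n₀ + n₁ + n₂ + n₃ = p) (hm : m₀ + m₁ + m₂ + m₃ = p)
    (I₀ I₁ I₂ I₃ J₀ J₁ J₂ J₃ : Finset (ZMod p))
    (hI₀ : I₀ = zmodInterval p a n₀)
    (hI₁ : I₁ = zmodInterval p (a + (n₀ : ZMod p)) n₁)
    (hI₂ : I₂ = zmodInterval p (a + ((n₀ + n₁ : ℕ) : ZMod p)) n₂)
    (hI₃ : I₃ = zmodInterval p (a + ((n₀ + n₁ + n₂ : ℕ) : ZMod p)) n₃)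
    (hJ₀ : J₀ = zmodInterval p b m₀)
    (hJ₁ : J₁ = zmodInterval p (b + (m₀ : ZMod p)) m₁)
    (hJ₂ : J₂ = zmodInterval p (b + ((m₀ + m₁ : ℕ) : ZMod p)) m₂)
    (hJ₃ : J₃ = zmodInterval p (b + ((m₀ + m₁ + m₂ : ℕ) : ZMod p)) m₃)
    (hsum : (I₂.card : ℝ) + J₂.card ≤ (1 - β / 2) * p)
    (hmin : 24 / β ≤ ((min I₂.card J₂.card : ℕ) : ℝ))
    (hlow : Nat.floor ((β / 8) * (p : ℝ)) ≤ min I₁.card (min I₃.card (min J₁.card J₃.card))) :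
    ∃ k : ℕ, (k : ℝ) ≤ 100 / (α * β) ∧
      ∃ fI₀ fI₂ fJ₀ fJ₂ : Fin k → Finset (ZMod p),
        Finset.univ.biUnion fI₀ = I₀ ∧
        Finset.univ.biUnion fJ₀ = J₀ ∧
        Finset.univ.biUnion fI₂ ⊆ I₂ ∧
        Finset.univ.biUnion fJ₂ ⊆ J₂ ∧
        ∀ i : Fin k,
          (∃ x : ZMod p, fI₂ i = zmodInterval p x (Nat.floor ((β / 24) * ((min I₂.card J₂.card : ℕ) : ℝ)))) ∧
          (∃ y : ZMod p, fJ₂ i = zmodInterval p y (Nat.floor ((β / 24) * ((min I₂.card J₂.card : ℕ) : ℝ)))) ∧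
          (fI₂ i).card = Nat.floor ((β / 24) * ((min I₂.card J₂.card : ℕ) : ℝ)) ∧
          (fJ₂ i).card = Nat.floor ((β / 24) * ((min I₂.card J₂.card : ℕ) : ℝ)) ∧
          (fI₀ i + fJ₂ i) ∩ (I₂ + J₂) = ∅ ∧
          (fJ₀ i + fI₂ i) ∩ (I₂ + J₂) = ∅ := by
  subst hI₀ hI₁ hI₂ hI₃ hJ₀ hJ₁ hJ₂ hJ₃
  rw [card_zmodInterval _ (by omega : n₂ ≤ p), card_zmodInterval _ (by omega : m₂ ≤ p)] at *
  rw [card_zmodInterval _ (by omega : n₁ ≤ p), card_zmodInterval _ (by omega : n₃ ≤ p),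
    card_zmodInterval _ (by omega : m₁ ≤ p), card_zmodInterval _ (by omega : m₃ ≤ p)] at hlow
  have hβ1 : β ≤ 1 := by linarith [show ((2 : ℝ) ^ 10)⁻¹ ≤ 1 by norm_num]
  have hα1 : α ≤ 1 := by linarith [show ((2 : ℝ) ^ 10)⁻¹ ≤ 1 by norm_num]
  have hNp : ((min n₂ m₂ : ℕ) : ℝ) ≤ p := by exact_mod_cast (show min n₂ m₂ ≤ p by omega)
  set L := ⌊β / 24 * ((min n₂ m₂ : ℕ) : ℝ)⌋₊
  have hL1 : 1 ≤ L := (Nat.one_le_floor_iff _).2 <| by rw [div_le_iff₀ hβ] at hmin; linarith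
  have hLN : L ≤ min n₂ m₂ :=
    Nat.floor_le_of_le (by nlinarith [(min n₂ m₂).cast_nonneg (α := ℝ)])
  have hL8 : L ≤ ⌊β / 8 * p⌋₊ :=
    Nat.floor_le_floor (by nlinarith [(min n₂ m₂).cast_nonneg (α := ℝ)])
  have hLp : (L : ℝ) ≤ β / 24 * p := (Nat.floor_le (by positivity)).trans (by nlinarith)
  have hnmL := add_add_le_of_le_one_sub_mul hsum hLp
  have : NeZero p := ⟨by omega⟩
  set s := p + 2 - (n₂ + m₂ + L)
  set k := max n₂ m₂ / s + 2
  obtain ⟨fI₀, hI₀, hfI₀⟩ := exists_biUnion_eq_add_inter_eq_empty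
    (Y := fun i : Fin k => gridSubinterval p (b + ((m₀ + m₁ : ℕ) : ZMod p)) m₂ L s i)
    fun x hx => exists_gridSubinterval_add_notMem a b hn hL1 (by omega) (by omega) (by omega)
      (by omega) (by omega) (by simp only [k]; gcongr; exact le_max_right _ _) hx
  obtain ⟨fJ₀, hJ₀, hfJ₀⟩ := exists_biUnion_eq_add_inter_eq_empty
    (Y := fun i : Fin k => gridSubinterval p (a + ((n₀ + n₁ : ℕ) : ZMod p)) n₂ L s i)
    fun x hx => add_comm (zmodInterval p _ n₂) _ ▸
      exists_gridSubinterval_add_notMem b a hm hL1 (by omega) (by omega) (by omega) (by omega)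
        (by omega) (by simp only [k]; gcongr; exact le_max_left _ _) hx
  refine ⟨k, natCast_max_div_add_two_le hα hα1 hβ hβ1 hsum hLp, fI₀,
    fun i => gridSubinterval p (a + ((n₀ + n₁ : ℕ) : ZMod p)) n₂ L s i, fJ₀,
    fun i => gridSubinterval p (b + ((m₀ + m₁ : ℕ) : ZMod p)) m₂ L s i, hI₀, hJ₀,
    biUnion_subset.2 fun i _ => gridSubinterval_subset _ (by omega),
    biUnion_subset.2 fun i _ => gridSubinterval_subset _ (by omega),
    fun i => ⟨⟨_, rfl⟩, ⟨_, rfl⟩, card_gridSubinterval _ (by omega),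
      card_gridSubinterval _ (by omega), hfI₀ i, hfJ₀ i⟩⟩

theorem stmt5 (α β : ℝ) (hα : 0 < α) (hβ : 0 < β)
    (hα' : α < ((2 : ℝ) ^ (10 : ℕ))⁻¹) (hβ' : β < ((2 : ℝ) ^ (10 : ℕ))⁻¹)
    (p : ℕ) (hp : p.Prime)
    (a b : ZMod p) (n₀ n₁ n₂ n₃ m₀ m₁ m₂ m₃ : ℕ)
    (hn : n₀ + n₁ + n₂ + n₃ = p) (hm : m₀ + m₁ + m₂ + m₃ = p)
    (I₀ I₁ I₂ I₃ J₀ J₁ J₂ J₃ : Finset (ZMod p))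
    (hI₀ : I₀ = zmodInterval p a n₀)
    (hI₁ : I₁ = zmodInterval p (a + (n₀ : ZMod p)) n₁)
    (hI₂ : I₂ = zmodInterval p (a + ((n₀ + n₁ : ℕ) : ZMod p)) n₂)
    (hI₃ : I₃ = zmodInterval p (a + ((n₀ + n₁ + n₂ : ℕ) : ZMod p)) n₃)
    (hJ₀ : J₀ = zmodInterval p b m₀)
    (hJ₁ : J₁ = zmodInterval p (b + (m₀ : ZMod p)) m₁)
    (hJ₂ : J₂ = zmodInterval p (b + ((m₀ + m₁ : ℕ) : ZMod p)) m₂)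
    (hJ₃ : J₃ = zmodInterval p (b + ((m₀ + m₁ + m₂ : ℕ) : ZMod p)) m₃)
    (hsum : (I₂.card : ℝ) + J₂.card ≤ (1 - β / 2) * p)
    (hratio₁ : (α / 2) * J₂.card ≤ (I₂.card : ℝ))
    (hratio₂ : (I₂.card : ℝ) ≤ (2 / α) * J₂.card)
    (hmin : 24 / β ≤ ((min I₂.card J₂.card : ℕ) : ℝ))
    (hlow : Nat.floor ((β / 8) * (p : ℝ)) ≤ min I₁.card (min I₃.card (min J₁.card J₃.card)))
    (hhigh : ((max I₁.card (max I₃.card (max J₁.card J₃.card)) : ℕ) : ℝ) ≤ (β / 4) * p) :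
    ∃ k : ℕ, (k : ℝ) ≤ 100 / (α * β) ∧
      ∃ fI₀ fI₂ fJ₀ fJ₂ : Fin k → Finset (ZMod p),
        Finset.univ.biUnion fI₀ = I₀ ∧
        Finset.univ.biUnion fJ₀ = J₀ ∧
        Finset.univ.biUnion fI₂ ⊆ I₂ ∧
        Finset.univ.biUnion fJ₂ ⊆ J₂ ∧
        ∀ i : Fin k,
          (∃ x : ZMod p, fI₂ i = zmodInterval p x (Nat.floor ((β / 24) * ((min I₂.card J₂.card : ℕ) : ℝ)))) ∧
          (∃ y : ZMod p, fJ₂ i = zmodInterval p y (Nat.floor ((β / 24) * ((min I₂.card J₂.card : ℕ) : ℝ)))) ∧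
          (fI₂ i).card = Nat.floor ((β / 24) * ((min I₂.card J₂.card : ℕ) : ℝ)) ∧
          (fJ₂ i).card = Nat.floor ((β / 24) * ((min I₂.card J₂.card : ℕ) : ℝ)) ∧
          (fI₀ i + fJ₂ i) ∩ (I₂ + J₂) = ∅ ∧
          (fJ₀ i + fI₂ i) ∩ (I₂ + J₂) = ∅ :=
  stmt5_general α β hα hβ hα' hβ' p a b n₀ n₁ n₂ n₃ m₀ m₁ m₂ m₃ hn hm I₀ I₁ I₂ I₃ J₀ J₁ J₂ J₃ hI₀
    hI₁ hI₂ hI₃ hJ₀ hJ₁ hJ₂ hJ₃ hsum hmin hlow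
end
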